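/- arXiv:1809.02549 — 2 statements merged into one kernel-verified Lean document; each statement's English description precedes it below -/
import Mathlib

section
/- Let (m_n) be an increasing sequence in [1,∞) such that lim_{n→∞} m_n/n does not exist in [0,∞]. Then for every A ⊆ ℕ, B̄d_{u;(m_n)}(A) + B̄d_{u;(m_n)}(ℕ \ A) > B̲d_{l;(m_n)}(A) + B̲d_{l;(m_n)}(ℕ \ A); in particular, B̄d_{u;(m_n)}(A) > B̲d_{l;(m_n)}(A) or B̄d_{u;(m_n)}(ℕ \ A) > B̲d_{l;(m_n)}(ℕ \ A). -/
open Filter Set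
open scoped ENNReal symmDiff

/-- Number of elements of `A` in the integer interval `[a, b]`, as an extended nonneg real. -/
noncomputable def cnt (A : Set ℕ) (a b : ℕ) : ℝ≥0∞ :=
  (Nat.card (↥(A ∩ Set.Icc a b)) : ℝ≥0∞)

/-- Lower `(m_n)`-density: `liminf_n |A ∩ [1, m_n]| / n`. -/
noncomputable def lowDens (m : ℕ → ℝ) (A : Set ℕ) : ℝ≥0∞ :=
  Filter.liminf (fun n : ℕ => cnt A 1 ⌊m n⌋₊ / (n : ℝ≥0∞)) Filter.atTop

/-- Upper `(m_n)`-density: `limsup_n |A ∩ [1, m_n]| / n`. -/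
noncomputable def upDens (m : ℕ → ℝ) (A : Set ℕ) : ℝ≥0∞ :=
  Filter.limsup (fun n : ℕ => cnt A 1 ⌊m n⌋₊ / (n : ℝ≥0∞)) Filter.atTop

/-- Lower `l;(m_n)`-Banach density: `liminf_s liminf_n |A ∩ [n+1, n+m_s]| / s`. -/
noncomputable def BdLL (m : ℕ → ℝ) (A : Set ℕ) : ℝ≥0∞ :=
  Filter.liminf (fun s : ℕ =>
    Filter.liminf (fun n : ℕ => cnt A (n + 1) (n + ⌊m s⌋₊) / (s : ℝ≥0∞)) Filter.atTop)
    Filter.atTop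

/-- Lower `u;(m_n)`-Banach density: `limsup_s liminf_n |A ∩ [n+1, n+m_s]| / s`. -/
noncomputable def BdLU (m : ℕ → ℝ) (A : Set ℕ) : ℝ≥0∞ :=
  Filter.limsup (fun s : ℕ =>
    Filter.liminf (fun n : ℕ => cnt A (n + 1) (n + ⌊m s⌋₊) / (s : ℝ≥0∞)) Filter.atTop)
    Filter.atTop

/-- Upper `l;(m_n)`-Banach density: `liminf_s limsup_n |A ∩ [n+1, n+m_s]| / s`. -/
noncomputable def BdUL (m : ℕ → ℝ) (A : Set ℕ) : ℝ≥0∞ :=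
  Filter.liminf (fun s : ℕ =>
    Filter.limsup (fun n : ℕ => cnt A (n + 1) (n + ⌊m s⌋₊) / (s : ℝ≥0∞)) Filter.atTop)
    Filter.atTop

/-- Upper `u;(m_n)`-Banach density: `limsup_s limsup_n |A ∩ [n+1, n+m_s]| / s`. -/
noncomputable def BdUU (m : ℕ → ℝ) (A : Set ℕ) : ℝ≥0∞ :=
  Filter.limsup (fun s : ℕ =>
    Filter.limsup (fun n : ℕ => cnt A (n + 1) (n + ⌊m s⌋₊) / (s : ℝ≥0∞)) Filter.atTop)
    Filter.atTop

lemma my_le_liminf_add {ι : Type*} (f : Filter ι) [f.NeBot] (u v : ι → ℝ≥0∞) :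
    liminf u f + liminf v f ≤ liminf (fun x => u x + v x) f := by
  refine le_of_forall_lt fun d hd => ?_
  rcases eq_or_ne (liminf u f) 0 with h0 | ha0
  · rw [h0, zero_add] at hd
    exact hd.trans_le (liminf_le_liminf (Eventually.of_forall fun n => le_add_self))
  rcases eq_or_ne (liminf v f) 0 with h0 | hb0
  · rw [h0, add_zero] at hd
    exact hd.trans_le (liminf_le_liminf (Eventually.of_forall fun n => le_self_add))
  obtain ⟨a', ha', b', hb', hd'⟩ := ENNReal.exists_lt_add_of_lt_add hd ha0 hb0
  refine hd'.trans_le (le_liminf_of_le (by isBoundedDefault) ?_)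
  filter_upwards [eventually_lt_of_lt_liminf ha', eventually_lt_of_lt_liminf hb'] with n h1 h2
  exact add_le_add h1.le h2.le

lemma my_limsup_add_le {ι : Type*} (f : Filter ι) (u v : ι → ℝ≥0∞) :
    limsup (fun x => u x + v x) f ≤ limsup u f + limsup v f := by
  rcases eq_or_ne (limsup u f) ⊤ with h | ha
  · rw [h, top_add]; exact le_top
  rcases eq_or_ne (limsup v f) ⊤ with h | hb
  · rw [h, add_top]; exact le_top
  refine ENNReal.le_of_forall_pos_le_add fun ε hε _ => ?_
  have hε2 : ((ε : ℝ≥0∞) / 2) ≠ 0 := by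
    simp [ENNReal.div_eq_zero_iff, hε.ne']
  have hu : ∀ᶠ x in f, u x < limsup u f + (ε : ℝ≥0∞) / 2 :=
    eventually_lt_of_limsup_lt (ENNReal.lt_add_right ha hε2)
  have hv : ∀ᶠ x in f, v x < limsup v f + (ε : ℝ≥0∞) / 2 :=
    eventually_lt_of_limsup_lt (ENNReal.lt_add_right hb hε2)
  refine limsup_le_of_le (by isBoundedDefault) ?_
  filter_upwards [hu, hv] with x h1 h2
  calc u x + v x ≤ (limsup u f + (ε : ℝ≥0∞) / 2) + (limsup v f + (ε : ℝ≥0∞) / 2) :=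
        add_le_add h1.le h2.le
    _ = limsup u f + limsup v f + (ε : ℝ≥0∞) := by
        rw [add_add_add_comm, ENNReal.add_halves]

lemma cnt_add_compl (A : Set ℕ) (a b : ℕ) :
    cnt A a b + cnt Aᶜ a b = ((b + 1 - a : ℕ) : ℝ≥0∞) := by
  unfold cnt
  rw [← Nat.cast_add]
  congr 1
  rw [Nat.card_coe_set_eq, Nat.card_coe_set_eq,
    ← Set.ncard_union_eq (disjoint_compl_right.mono inter_subset_left inter_subset_left)
      ((Set.finite_Icc a b).inter_of_right A) ((Set.finite_Icc a b).inter_of_right Aᶜ)]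
  rw [inter_comm A, inter_comm Aᶜ, Set.inter_union_compl, ← Finset.coe_Icc,
    Set.ncard_coe_finset, Nat.card_Icc]

lemma fsum (m : ℕ → ℝ) (A : Set ℕ) (s n : ℕ) :
    cnt A (n + 1) (n + ⌊m s⌋₊) / (s : ℝ≥0∞) + cnt Aᶜ (n + 1) (n + ⌊m s⌋₊) / (s : ℝ≥0∞)
      = (⌊m s⌋₊ : ℝ≥0∞) / (s : ℝ≥0∞) := by
  rw [← ENNReal.add_div, cnt_add_compl]
  congr 2
  omega

lemma main_ineq (m : ℕ → ℝ) (A : Set ℕ) :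
    BdLL m A + BdLL m Aᶜ ≤ liminf (fun s : ℕ => (⌊m s⌋₊ : ℝ≥0∞) / (s : ℝ≥0∞)) atTop ∧
    limsup (fun s : ℕ => (⌊m s⌋₊ : ℝ≥0∞) / (s : ℝ≥0∞)) atTop ≤ BdUU m A + BdUU m Aᶜ := by
  set fA : ℕ → ℕ → ℝ≥0∞ := fun s n => cnt A (n + 1) (n + ⌊m s⌋₊) / (s : ℝ≥0∞) with hfA
  set fC : ℕ → ℕ → ℝ≥0∞ := fun s n => cnt Aᶜ (n + 1) (n + ⌊m s⌋₊) / (s : ℝ≥0∞) with hfC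
  set g : ℕ → ℝ≥0∞ := fun s => (⌊m s⌋₊ : ℝ≥0∞) / (s : ℝ≥0∞) with hg
  have hsum : ∀ s, (fun n => fA s n + fC s n) = fun _ : ℕ => g s := by
    intro s; funext n; exact fsum m A s n
  have e1 : BdLL m A = liminf (fun s => liminf (fA s) atTop) atTop := rfl
  have e2 : BdLL m Aᶜ = liminf (fun s => liminf (fC s) atTop) atTop := rfl
  have e3 : BdUU m A = limsup (fun s => limsup (fA s) atTop) atTop := rfl
  have e4 : BdUU m Aᶜ = limsup (fun s => limsup (fC s) atTop) atTop := rfl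
  constructor
  · have key1 : ∀ s, liminf (fA s) atTop + liminf (fC s) atTop ≤ g s := by
      intro s
      calc liminf (fA s) atTop + liminf (fC s) atTop
          ≤ liminf (fun n => fA s n + fC s n) atTop := my_le_liminf_add _ _ _
        _ = g s := by rw [hsum s, liminf_const]
    rw [e1, e2]
    exact (my_le_liminf_add atTop _ _).trans
      (liminf_le_liminf (Eventually.of_forall fun s => key1 s))
  · have key2 : ∀ s, g s ≤ limsup (fA s) atTop + limsup (fC s) atTop := by
      intro s
      calc g s = limsup (fun n => fA s n + fC s n) atTop := by rw [hsum s, limsup_const]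
        _ ≤ _ := my_limsup_add_le _ _ _
    rw [e3, e4]
    exact (limsup_le_limsup (Eventually.of_forall fun s => key2 s)).trans
      (my_limsup_add_le atTop _ _)

lemma lim_compare (m : ℕ → ℝ) (h1 : ∀ n, 1 ≤ m n) :
    liminf (fun s : ℕ => (⌊m s⌋₊ : ℝ≥0∞) / (s : ℝ≥0∞)) atTop ≤
      liminf (fun n : ℕ => ENNReal.ofReal (m n / (n : ℝ))) atTop ∧
    limsup (fun n : ℕ => ENNReal.ofReal (m n / (n : ℝ))) atTop ≤
      limsup (fun s : ℕ => (⌊m s⌋₊ : ℝ≥0∞) / (s : ℝ≥0∞)) atTop := by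
  set g : ℕ → ℝ≥0∞ := fun s => (⌊m s⌋₊ : ℝ≥0∞) / (s : ℝ≥0∞) with hg
  set F : ℕ → ℝ≥0∞ := fun n => ENNReal.ofReal (m n / (n : ℝ)) with hF
  have hFeq : ∀ s : ℕ, 1 ≤ s → F s = ENNReal.ofReal (m s) / (s : ℝ≥0∞) := by
    intro s hs
    have hs0 : (0 : ℝ) < s := by exact_mod_cast hs
    simp only [hF]
    rw [ENNReal.ofReal_div_of_pos hs0, ENNReal.ofReal_natCast]
  have hm0 : ∀ s, (0 : ℝ) ≤ m s := fun s => zero_le_one.trans (h1 s)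
  have hgF : ∀ᶠ s : ℕ in atTop, g s ≤ F s := by
    filter_upwards [eventually_ge_atTop 1] with s hs
    rw [hFeq s hs]
    apply ENNReal.div_le_div_right
    rw [show ((⌊m s⌋₊ : ℕ) : ℝ≥0∞) = ENNReal.ofReal (⌊m s⌋₊ : ℝ) by rw [ENNReal.ofReal_natCast]]
    exact ENNReal.ofReal_le_ofReal (Nat.floor_le (hm0 s))
  have hFg : ∀ᶠ s : ℕ in atTop, F s ≤ g s + 1 / (s : ℝ≥0∞) := by
    filter_upwards [eventually_ge_atTop 1] with s hs
    rw [hFeq s hs, hg]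
    simp only
    rw [← ENNReal.add_div]
    apply ENNReal.div_le_div_right
    calc ENNReal.ofReal (m s) ≤ ENNReal.ofReal ((⌊m s⌋₊ : ℝ) + 1) :=
          ENNReal.ofReal_le_ofReal (Nat.lt_floor_add_one (m s)).le
      _ = (⌊m s⌋₊ : ℝ≥0∞) + 1 := by
          rw [ENNReal.ofReal_add (Nat.cast_nonneg _) zero_le_one, ENNReal.ofReal_natCast,
            ENNReal.ofReal_one]
  refine ⟨liminf_le_liminf hgF, ?_⟩
  calc limsup F atTop ≤ limsup (fun s : ℕ => g s + 1 / (s : ℝ≥0∞)) atTop :=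
        limsup_le_limsup hFg
    _ ≤ limsup g atTop + limsup (fun s : ℕ => 1 / (s : ℝ≥0∞)) atTop := my_limsup_add_le _ _ _
    _ = limsup g atTop := by
        have hz : limsup (fun s : ℕ => 1 / (s : ℝ≥0∞)) atTop = 0 :=
          Tendsto.limsup_eq (by simpa [one_div] using ENNReal.tendsto_inv_nat_nhds_zero)
        rw [hz, add_zero]

theorem stmt14 (m : ℕ → ℝ) (hm : Monotone m) (h1 : ∀ n, 1 ≤ m n)
    (hne : Filter.liminf (fun n : ℕ => ENNReal.ofReal (m n / (n : ℝ))) Filter.atTop <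
      Filter.limsup (fun n : ℕ => ENNReal.ofReal (m n / (n : ℝ))) Filter.atTop)
    (A : Set ℕ) :
    BdLL m A + BdLL m Aᶜ < BdUU m A + BdUU m Aᶜ ∧
      (BdLL m A < BdUU m A ∨ BdLL m Aᶜ < BdUU m Aᶜ) := by
  obtain ⟨hlo, hhi⟩ := main_ineq m A
  obtain ⟨hc1, hc2⟩ := lim_compare m h1
  have hmain : BdLL m A + BdLL m Aᶜ < BdUU m A + BdUU m Aᶜ :=
    ((hlo.trans hc1).trans_lt hne).trans_le (hc2.trans hhi)
  refine ⟨hmain, ?_⟩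
  by_contra h
  push_neg at h
  exact absurd hmain (not_lt.2 (add_le_add h.1 h.2))
end

section
/- Let (m_n) be an increasing sequence in [1,∞). The following are equivalent: (i) B̲d_{l;(m_n)}(A) = B̲d_{u;(m_n)}(A) for every A ⊆ ℕ; (ii) B̲d_{l;(m_n)}(ℕ) = B̲d_{u;(m_n)}(ℕ); (iii) the limit lim_{n→∞} m_n/n exists in [0,∞]. -/
open Filter Set
open scoped ENNReal symmDiff

/-!
Write `G_A(M) = liminf_n |A ∩ [n+1, n+M]|`, so that the two lower Banach densities of `A` are the
liminf and the limsup of `G_A(⌊m_s⌋) / s`. A window of length `M + K` splits into windows of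
lengths `M` and `K`, so `G_A` is superadditive. With `α_A = sup_K G_A(K) / K` this gives
`G_A(M) ≤ α_A M` and, for each fixed `K`, `(G_A(K) / K) M ≤ G_A(M) + G_A(K)`; the error `G_A(K)`
disappears after dividing by `s`. Hence the lower density of `A` is at least `α_A` times the liminf,
and the upper one at most `α_A` times the limsup, of `⌊m_s⌋ / s`. So they agree for every `A` as
soon as `⌊m_s⌋ / s` converges, that is, as soon as they agree for `A = ℕ`, where `G(M) = M`.
Finally `⌊m_s⌋ / s` and `m_s / s` differ by at most `1 / s`.
-/

open scoped Topology

theorem ENNReal.le_liminf_add {ι : Type*} (f : Filter ι) (u v : ι → ℝ≥0∞) :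
    liminf u f + liminf v f ≤ liminf (u + v) f := by
  simp only [liminf_eq_iSup_iInf]
  refine ENNReal.biSup_add_biSup_le' ⟨univ, f.univ_mem⟩ ⟨univ, f.univ_mem⟩ fun s hs t ht => ?_
  refine le_trans ?_ (le_biSup _ (f.inter_mem hs ht))
  exact le_iInf₂ fun i hi => add_le_add (iInf₂_le i hi.1) (iInf₂_le i hi.2)

theorem ENNReal.liminf_eq_and_limsup_eq_of_le_of_le_add {ι : Type*} {f : Filter ι}
    {u v w : ι → ℝ≥0∞} (hw : Tendsto w f (𝓝 0)) (huv : u ≤ᶠ[f] v) (hvu : v ≤ᶠ[f] u + w) :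
    liminf u f = liminf v f ∧ limsup u f = limsup v f :=
  ⟨le_antisymm (liminf_le_liminf huv)
      ((liminf_le_liminf hvu).trans (ENNReal.liminf_add_of_right_tendsto_zero hw u).le),
    le_antisymm (limsup_le_limsup huv)
      ((limsup_le_limsup hvu).trans (ENNReal.limsup_add_of_right_tendsto_zero hw u).le)⟩

theorem ENNReal.natCast_floor_le_ofReal (x : ℝ) : (⌊x⌋₊ : ℝ≥0∞) ≤ ENNReal.ofReal x := by
  rcases le_or_gt 0 x with hx | hx
  · rw [← ENNReal.ofReal_natCast]
    exact ENNReal.ofReal_le_ofReal (Nat.floor_le hx)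
  · simp [Nat.floor_of_nonpos hx.le]

theorem ENNReal.ofReal_le_natCast_floor_add_one (x : ℝ) :
    ENNReal.ofReal x ≤ (⌊x⌋₊ : ℝ≥0∞) + 1 := by
  rw [← ENNReal.ofReal_natCast, ← ENNReal.ofReal_one,
    ← ENNReal.ofReal_add (by positivity) zero_le_one]
  exact ENNReal.ofReal_le_ofReal (Nat.lt_floor_add_one x).le

theorem liminf_limsup_natFloor_div_eq (m : ℕ → ℝ) :
    liminf (fun s : ℕ => (⌊m s⌋₊ : ℝ≥0∞) / s) atTop
        = liminf (fun s : ℕ => ENNReal.ofReal (m s / s)) atTop ∧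
      limsup (fun s : ℕ => (⌊m s⌋₊ : ℝ≥0∞) / s) atTop
        = limsup (fun s : ℕ => ENNReal.ofReal (m s / s)) atTop := by
  have hw : Tendsto (fun s : ℕ => 1 / (s : ℝ≥0∞)) atTop (𝓝 0) := by
    simpa only [one_div] using ENNReal.tendsto_inv_nat_nhds_zero
  have hofReal : ∀ᶠ s : ℕ in atTop, ENNReal.ofReal (m s / s) = ENNReal.ofReal (m s) / s := by
    filter_upwards [eventually_gt_atTop 0] with s hs
    rw [ENNReal.ofReal_div_of_pos (Nat.cast_pos.mpr hs), ENNReal.ofReal_natCast]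
  refine ENNReal.liminf_eq_and_limsup_eq_of_le_of_le_add hw ?_ ?_
  · filter_upwards [hofReal] with s hs
    rw [hs]
    exact ENNReal.div_le_div_right (ENNReal.natCast_floor_le_ofReal _) _
  · filter_upwards [hofReal] with s hs
    rw [hs, Pi.add_apply, ← ENNReal.add_div]
    exact ENNReal.div_le_div_right (ENNReal.ofReal_le_natCast_floor_add_one _) _

section WindowCount

variable (A : Set ℕ) (n M K : ℕ)

theorem cnt_eq_ncard (a b : ℕ) : cnt A a b = ((A ∩ Icc a b).ncard : ℝ≥0∞) := by
  rw [cnt, Nat.card_coe_set_eq]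

theorem cnt_univ_window : cnt univ (n + 1) (n + M) = M := by
  rw [cnt_eq_ncard, univ_inter, ← Finset.coe_Icc, ncard_coe_finset, Nat.card_Icc,
    show n + M + 1 - (n + 1) = M by omega]

theorem cnt_window_le : cnt A (n + 1) (n + M) ≤ M := by
  rw [← cnt_univ_window n M, cnt_eq_ncard, cnt_eq_ncard, Nat.cast_le]
  exact ncard_le_ncard (inter_subset_inter_left _ (subset_univ A))

theorem cnt_window_mono {M K : ℕ} (h : M ≤ K) :
    cnt A (n + 1) (n + M) ≤ cnt A (n + 1) (n + K) := by
  rw [cnt_eq_ncard, cnt_eq_ncard, Nat.cast_le]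
  exact ncard_le_ncard (inter_subset_inter_right _ (Icc_subset_Icc le_rfl (by omega)))
    ((finite_Icc _ _).inter_of_right _)

theorem cnt_window_add :
    cnt A (n + 1) (n + (M + K)) = cnt A (n + 1) (n + M) + cnt A (n + M + 1) (n + M + K) := by
  have hdisj : Disjoint (A ∩ Icc (n + 1) (n + M)) (A ∩ Icc (n + M + 1) (n + M + K)) :=
    disjoint_left.mpr fun x hx hx' => by simp only [mem_inter_iff, mem_Icc] at hx hx'; omega
  have hunion : A ∩ Icc (n + 1) (n + (M + K))
      = (A ∩ Icc (n + 1) (n + M)) ∪ (A ∩ Icc (n + M + 1) (n + M + K)) := by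
    rw [← inter_union_distrib_left]
    congr 1
    ext x
    simp only [mem_union, mem_Icc]
    omega
  simp only [cnt_eq_ncard]
  rw [hunion, ncard_union_eq hdisj, Nat.cast_add]

noncomputable def liminfWindowCount : ℝ≥0∞ :=
  liminf (fun n : ℕ => cnt A (n + 1) (n + M)) atTop

theorem liminfWindowCount_le : liminfWindowCount A M ≤ M :=
  (liminf_le_liminf (.of_forall fun n => cnt_window_le A n M)).trans_eq (liminf_const _)

theorem liminfWindowCount_zero : liminfWindowCount A 0 = 0 := by
  simpa using liminfWindowCount_le A 0

theorem liminfWindowCount_ne_top : liminfWindowCount A M ≠ ⊤ :=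
  ((liminfWindowCount_le A M).trans_lt (ENNReal.natCast_lt_top M)).ne

theorem liminfWindowCount_univ : liminfWindowCount univ M = M := by
  rw [liminfWindowCount, liminf_congr (.of_forall fun n => cnt_univ_window n M), liminf_const]

theorem liminfWindowCount_mono {M K : ℕ} (h : M ≤ K) :
    liminfWindowCount A M ≤ liminfWindowCount A K :=
  liminf_le_liminf (.of_forall fun n => cnt_window_mono A n h)

theorem le_liminfWindowCount_add :
    liminfWindowCount A M + liminfWindowCount A K ≤ liminfWindowCount A (M + K) := by
  have hshift :
      liminf (fun n : ℕ => cnt A (n + M + 1) (n + M + K)) atTop = liminfWindowCount A K :=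
    liminf_nat_add (fun n => cnt A (n + 1) (n + K)) M
  rw [← hshift, liminfWindowCount, liminfWindowCount,
    liminf_congr (.of_forall fun n => cnt_window_add A n M K)]
  exact ENNReal.le_liminf_add atTop _ _

theorem natCast_mul_le_liminfWindowCount_mul (q : ℕ) :
    q * liminfWindowCount A K ≤ liminfWindowCount A (q * K) := by
  induction q with
  | zero => simp [liminfWindowCount_zero]
  | succ q ih =>
    calc ((q + 1 : ℕ) : ℝ≥0∞) * liminfWindowCount A K
        = q * liminfWindowCount A K + liminfWindowCount A K := by push_cast; ring
      _ ≤ liminfWindowCount A (q * K) + liminfWindowCount A K := by gcongr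
      _ ≤ liminfWindowCount A ((q + 1) * K) := by
        rw [add_one_mul]; exact le_liminfWindowCount_add A _ _

/-- Fekete-type comparison: a window of length `M` contains `⌊M / K⌋` disjoint windows of
length `K`, and `M ≤ (⌊M / K⌋ + 1) K`. -/
theorem liminfWindowCount_div_mul_le :
    liminfWindowCount A K / K * M ≤ liminfWindowCount A M + liminfWindowCount A K := by
  rcases Nat.eq_zero_or_pos K with rfl | hK
  · simp [liminfWindowCount_zero]
  set q := M / K
  have hM : (M : ℝ≥0∞) ≤ (q + 1) * K := by
    exact_mod_cast (Nat.lt_div_mul_add hK).le.trans_eq (add_one_mul q K).symm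
  calc liminfWindowCount A K / K * M
      ≤ liminfWindowCount A K / K * ((q + 1) * K) := by gcongr
    _ = q * liminfWindowCount A K + liminfWindowCount A K := by
      rw [mul_comm, mul_assoc, ENNReal.mul_div_cancel (by exact_mod_cast hK.ne')
        (ENNReal.natCast_ne_top K), add_one_mul]
    _ ≤ liminfWindowCount A M + liminfWindowCount A K := by
      gcongr
      exact (natCast_mul_le_liminfWindowCount_mul A K q).trans
        (liminfWindowCount_mono A (Nat.div_mul_le_self M K))

/-- By superadditivity (Fekete), also the limit of `liminfWindowCount A M / M` as `M → ∞`. -/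
noncomputable def windowDensity : ℝ≥0∞ :=
  ⨆ M : ℕ, liminfWindowCount A M / M

theorem windowDensity_ne_top : windowDensity A ≠ ⊤ :=
  ((iSup_le fun M => ENNReal.div_le_of_le_mul ((liminfWindowCount_le A M).trans_eq
    (one_mul _).symm)).trans_lt ENNReal.one_lt_top).ne

theorem liminfWindowCount_le_windowDensity_mul :
    liminfWindowCount A M ≤ windowDensity A * M := by
  rcases eq_or_ne M 0 with rfl | hM
  · simp [liminfWindowCount_zero]
  calc liminfWindowCount A M = liminfWindowCount A M / M * M :=
        (ENNReal.div_mul_cancel (by exact_mod_cast hM) (ENNReal.natCast_ne_top M)).symm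
    _ ≤ windowDensity A * M := by gcongr; exact le_iSup (fun M => liminfWindowCount A M / M) M

variable (w : ℕ → ℕ)

theorem limsup_liminfWindowCount_div_le :
    limsup (fun s : ℕ => liminfWindowCount A (w s) / s) atTop
      ≤ windowDensity A * limsup (fun s : ℕ => (w s : ℝ≥0∞) / s) atTop := by
  rw [← ENNReal.limsup_const_mul_of_ne_top (windowDensity_ne_top A)]
  refine limsup_le_limsup (.of_forall fun s => ?_)
  dsimp only
  rw [← mul_div_assoc]
  gcongr
  exact liminfWindowCount_le_windowDensity_mul A (w s)

theorem windowDensity_mul_liminf_le :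
    windowDensity A * liminf (fun s : ℕ => (w s : ℝ≥0∞) / s) atTop
      ≤ liminf (fun s : ℕ => liminfWindowCount A (w s) / s) atTop := by
  rw [windowDensity, ENNReal.iSup_mul]
  refine iSup_le fun K => ?_
  have hsmall : Tendsto (fun s : ℕ => liminfWindowCount A K / s) atTop (𝓝 0) := by
    simpa only [div_eq_mul_inv, mul_zero] using
      ENNReal.Tendsto.const_mul ENNReal.tendsto_inv_nat_nhds_zero
        (.inr (liminfWindowCount_ne_top A K))
  calc liminfWindowCount A K / K * liminf (fun s : ℕ => (w s : ℝ≥0∞) / s) atTop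
      ≤ liminf (fun s : ℕ => liminfWindowCount A K / K * ((w s : ℝ≥0∞) / s)) atTop := by
        have := ENNReal.le_liminf_mul (f := atTop) (u := fun _ : ℕ => liminfWindowCount A K / K)
          (v := fun s : ℕ => (w s : ℝ≥0∞) / s)
        rwa [liminf_const] at this
    _ ≤ liminf ((fun s : ℕ => liminfWindowCount A (w s) / s)
          + fun s : ℕ => liminfWindowCount A K / s) atTop := by
        refine liminf_le_liminf (.of_forall fun s => ?_)
        rw [Pi.add_apply, ← ENNReal.add_div, ← mul_div_assoc]
        gcongr
        exact liminfWindowCount_div_mul_le A (w s) K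
    _ = liminf (fun s : ℕ => liminfWindowCount A (w s) / s) atTop :=
        ENNReal.liminf_add_of_right_tendsto_zero hsmall _

theorem liminf_eq_limsup_liminfWindowCount_div
    (h : liminf (fun s : ℕ => (w s : ℝ≥0∞) / s) atTop
      = limsup (fun s : ℕ => (w s : ℝ≥0∞) / s) atTop) :
    liminf (fun s : ℕ => liminfWindowCount A (w s) / s) atTop
      = limsup (fun s : ℕ => liminfWindowCount A (w s) / s) atTop :=
  le_antisymm liminf_le_limsup <| calc
    _ ≤ windowDensity A * limsup (fun s : ℕ => (w s : ℝ≥0∞) / s) atTop :=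
      limsup_liminfWindowCount_div_le A w
    _ = windowDensity A * liminf (fun s : ℕ => (w s : ℝ≥0∞) / s) atTop := by rw [h]
    _ ≤ _ := windowDensity_mul_liminf_le A w

end WindowCount

theorem liminf_cnt_div_natCast (A : Set ℕ) (M : ℕ) {s : ℕ} (hs : s ≠ 0) :
    liminf (fun n : ℕ => cnt A (n + 1) (n + M) / s) atTop = liminfWindowCount A M / s := by
  simp only [div_eq_mul_inv]
  rw [ENNReal.liminf_mul_const_of_ne_top (ENNReal.inv_ne_top.mpr (by exact_mod_cast hs)),
    mul_comm, liminfWindowCount]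

theorem BdLL_eq_liminf (m : ℕ → ℝ) (A : Set ℕ) :
    BdLL m A = liminf (fun s : ℕ => liminfWindowCount A ⌊m s⌋₊ / s) atTop :=
  liminf_congr <| (eventually_ne_atTop 0).mono fun _ hs => liminf_cnt_div_natCast A _ hs

theorem BdLU_eq_limsup (m : ℕ → ℝ) (A : Set ℕ) :
    BdLU m A = limsup (fun s : ℕ => liminfWindowCount A ⌊m s⌋₊ / s) atTop :=
  limsup_congr <| (eventually_ne_atTop 0).mono fun _ hs => liminf_cnt_div_natCast A _ hs

theorem stmt18_general (m : ℕ → ℝ) :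
    ((∀ A : Set ℕ, BdLL m A = BdLU m A) ↔ BdLL m Set.univ = BdLU m Set.univ) ∧
      (BdLL m Set.univ = BdLU m Set.univ ↔
        Filter.liminf (fun n : ℕ => ENNReal.ofReal (m n / (n : ℝ))) Filter.atTop =
          Filter.limsup (fun n : ℕ => ENNReal.ofReal (m n / (n : ℝ))) Filter.atTop) := by
  have huniv : BdLL m univ = BdLU m univ ↔ liminf (fun s : ℕ => (⌊m s⌋₊ : ℝ≥0∞) / s) atTop
      = limsup (fun s : ℕ => (⌊m s⌋₊ : ℝ≥0∞) / s) atTop := by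
    simp only [BdLL_eq_liminf, BdLU_eq_limsup, liminfWindowCount_univ]
  obtain ⟨hliminf, hlimsup⟩ := liminf_limsup_natFloor_div_eq m
  refine ⟨⟨fun h => h univ, fun h A => ?_⟩, huniv.trans (by rw [hliminf, hlimsup])⟩
  rw [BdLL_eq_liminf, BdLU_eq_limsup]
  exact liminf_eq_limsup_liminfWindowCount_div A _ (huniv.mp h)

theorem stmt18 (m : ℕ → ℝ) (hm : Monotone m) (h1 : ∀ n, 1 ≤ m n) :
    ((∀ A : Set ℕ, BdLL m A = BdLU m A) ↔ BdLL m Set.univ = BdLU m Set.univ) ∧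
      (BdLL m Set.univ = BdLU m Set.univ ↔
        Filter.liminf (fun n : ℕ => ENNReal.ofReal (m n / (n : ℝ))) Filter.atTop =
          Filter.limsup (fun n : ℕ => ENNReal.ofReal (m n / (n : ℝ))) Filter.atTop) :=
  stmt18_general m
end
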